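/- arXiv:1104.5628 — 3 statements merged into one kernel-verified Lean document; each statement's English description precedes it below -/
import Mathlib

section
/- Let d, a, b be integers with d ≥ 1 and gcd(d,a,b) = 1. The map [(x,y)] ↦ [(x^{gcd(d,b)}, y^{gcd(d,a)})] induces a well-defined bijection from X(d; a, b) to X(d/(gcd(d,a)·gcd(d,b)); a/gcd(d,a), b/gcd(d,b)). -/
private lemma pow_eq_of_mod_eq' {z : ℂ} {m n k : ℕ} (hz : z ^ m = 1) (h : n % m = k % m) :
    z ^ n = z ^ k := by
  conv_lhs => rw [← Nat.div_add_mod n m]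
  conv_rhs => rw [← Nat.div_add_mod k m]
  simp [pow_add, pow_mul, hz, h]

private lemma pow_one_of_dvd' {z : ℂ} {m n : ℕ} (hz : z ^ m = 1) (hmn : m ∣ n) : z ^ n = 1 := by
  obtain ⟨c, rfl⟩ := hmn
  rw [pow_mul, hz, one_pow]

private lemma pow_inv_unit' {ω : ℂ} {β a : ℕ} (hβ : 0 < β) (hω : ω ^ β = 1)
    (hco : Nat.Coprime a β) : ω ^ (a * a ^ (Nat.totient β - 1)) = ω := by
  have ht : 0 < Nat.totient β := Nat.totient_pos.mpr hβ
  have h1 : a * a ^ (Nat.totient β - 1) = a ^ Nat.totient β := by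
    rw [← pow_succ']
    congr 1
    omega
  have h2 : a ^ Nat.totient β ≡ 1 [MOD β] := Nat.ModEq.pow_totient hco
  calc ω ^ (a * a ^ (Nat.totient β - 1)) = ω ^ (a ^ Nat.totient β) := by rw [h1]
    _ = ω ^ 1 := pow_eq_of_mod_eq' hω h2
    _ = ω := pow_one ω

private lemma rel_equiv' (m u v : ℕ) (hm : 0 < m) :
    Equivalence (fun x y : ℂ × ℂ => ∃ ξ : ℂ, ξ ^ m = 1 ∧ y = (ξ ^ u * x.1, ξ ^ v * x.2)) := by
  have hcomp : ∀ (ξ : ℂ), ξ ^ m = 1 → ∀ (w : ℕ) (c : ℂ), (ξ ^ (m - 1)) ^ w * (ξ ^ w * c) = c := by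
    intro ξ hξ w c
    rw [← pow_mul, ← mul_assoc, ← pow_add]
    have : (m - 1) * w + w = m * w := by
      have : (m - 1) + 1 = m := Nat.succ_pred_eq_of_pos hm
      nlinarith [this]
    rw [this, pow_mul, hξ, one_pow, one_mul]
  constructor
  · intro x
    exact ⟨1, one_pow m, by simp⟩
  · rintro x y ⟨ξ, hξ, rfl⟩
    refine ⟨ξ ^ (m - 1), ?_, ?_⟩
    · rw [← pow_mul, mul_comm, pow_mul, hξ, one_pow]
    · dsimp only
      rw [hcomp ξ hξ u x.1, hcomp ξ hξ v x.2]
  · rintro x y z ⟨ξ, hξ, rfl⟩ ⟨η, hη, rfl⟩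
    refine ⟨ξ * η, by rw [mul_pow, hξ, hη, one_mul], ?_⟩
    dsimp only
    rw [Prod.mk.injEq]
    constructor <;> ring

/-- For `gcd(d,a,b) = 1`, the map `[(x,y)] ↦ [(x^{gcd(d,b)}, y^{gcd(d,a)})]` induces a
well-defined bijection from `X(d; a, b)` onto
`X(d/(gcd(d,a)·gcd(d,b)); a/gcd(d,a), b/gcd(d,b))`. -/
theorem stmt_4 (d a b : ℕ) (hd : 0 < d) (h : Nat.gcd d (Nat.gcd a b) = 1) :
    ∃ F : Quot (fun x y : ℂ × ℂ => ∃ ξ : ℂ, ξ ^ d = 1 ∧ y = (ξ ^ a * x.1, ξ ^ b * x.2)) →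
          Quot (fun x y : ℂ × ℂ => ∃ ξ : ℂ, ξ ^ (d / (Nat.gcd d a * Nat.gcd d b)) = 1 ∧
            y = (ξ ^ (a / Nat.gcd d a) * x.1, ξ ^ (b / Nat.gcd d b) * x.2)),
      (∀ p : ℂ × ℂ, F (Quot.mk _ p) = Quot.mk _ (p.1 ^ Nat.gcd d b, p.2 ^ Nat.gcd d a)) ∧
      Function.Bijective F := by
  set α := Nat.gcd d a with hαdef
  set β := Nat.gcd d b with hβdef
  have hα0 : 0 < α := Nat.gcd_pos_of_pos_left a hd
  have hβ0 : 0 < β := Nat.gcd_pos_of_pos_left b hd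
  have hαd : α ∣ d := Nat.gcd_dvd_left d a
  have hβd : β ∣ d := Nat.gcd_dvd_left d b
  have hαa : α ∣ a := Nat.gcd_dvd_right d a
  have hβb : β ∣ b := Nat.gcd_dvd_right d b
  have hcop : Nat.Coprime α β := by
    have h1 : Nat.gcd α β ∣ Nat.gcd d (Nat.gcd a b) :=
      Nat.dvd_gcd ((Nat.gcd_dvd_left α β).trans hαd)
        (Nat.dvd_gcd ((Nat.gcd_dvd_left α β).trans hαa) ((Nat.gcd_dvd_right α β).trans hβb))
    rw [h] at h1
    exact Nat.dvd_one.mp h1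
  have hαβd : α * β ∣ d := hcop.mul_dvd_of_dvd_of_dvd hαd hβd
  have he : α * β * (d / (α * β)) = d := Nat.mul_div_cancel' hαβd
  have he0 : 0 < d / (α * β) := Nat.div_pos (Nat.le_of_dvd hd hαβd) (by positivity)
  have hcoaβ : Nat.Coprime a β := by
    have h1 : Nat.gcd a β ∣ Nat.gcd α β :=
      Nat.dvd_gcd (Nat.dvd_gcd ((Nat.gcd_dvd_right a β).trans hβd) (Nat.gcd_dvd_left a β))
        (Nat.gcd_dvd_right a β)
    exact Nat.dvd_one.mp (hcop ▸ h1)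
  have hcobα : Nat.Coprime b α := by
    have h1 : Nat.gcd b α ∣ Nat.gcd β α :=
      Nat.dvd_gcd (Nat.dvd_gcd ((Nat.gcd_dvd_right b α).trans hαd) (Nat.gcd_dvd_left b α))
        (Nat.gcd_dvd_right b α)
    exact Nat.dvd_one.mp (hcop.symm ▸ h1)
  -- exponent arithmetic for well-definedness
  have hexp1 : α * β * (a / α) = a * β := by
    rw [mul_comm α β, mul_assoc, Nat.mul_div_cancel' hαa, mul_comm]
  have hexp2 : α * β * (b / β) = b * α := by
    rw [mul_assoc, Nat.mul_div_cancel' hβb, mul_comm]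
  refine ⟨Quot.lift (fun p : ℂ × ℂ => Quot.mk _ (p.1 ^ β, p.2 ^ α)) ?_, fun p => rfl, ?_, ?_⟩
  · rintro p q ⟨ξ, hξ, rfl⟩
    dsimp only
    apply Quot.sound
    refine ⟨ξ ^ (α * β), by rw [← pow_mul, he, hξ], ?_⟩
    dsimp only
    rw [Prod.mk.injEq]
    constructor
    · rw [mul_pow, ← pow_mul, ← pow_mul, hexp1]
    · rw [mul_pow, ← pow_mul, ← pow_mul, hexp2]
  · -- injectivity
    rintro ⟨p⟩ ⟨q⟩ hFq
    have hE := Quot.eqvGen_exact hFq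
    rw [Equivalence.eqvGen_iff (rel_equiv' _ _ _ he0)] at hE
    obtain ⟨η, hη, heq⟩ := hE
    rw [Prod.ext_iff] at heq
    obtain ⟨heq1, heq2⟩ := heq
    dsimp only at heq1 heq2
    obtain ⟨ζ, hζ⟩ : ∃ ζ : ℂ, ζ ^ (α * β) = η :=
      IsAlgClosed.exists_pow_nat_eq η (by positivity)
    have hζd : ζ ^ d = 1 := by rw [← he, pow_mul, hζ, hη]
    have hζ0 : ζ ≠ 0 := by
      intro h0
      rw [h0, zero_pow hd.ne'] at hζd
      exact zero_ne_one hζd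
    -- x component
    have hx : q.1 ^ β = (ζ ^ a * p.1) ^ β := by
      rw [heq1, ← hζ, ← pow_mul, hexp1, mul_pow, ← pow_mul]
    have hy : q.2 ^ α = (ζ ^ b * p.2) ^ α := by
      rw [heq2, ← hζ, ← pow_mul, hexp2, mul_pow, ← pow_mul]
    set ω : ℂ := if p.1 = 0 then 1 else q.1 / (ζ ^ a * p.1) with hωdef
    set τ : ℂ := if p.2 = 0 then 1 else q.2 / (ζ ^ b * p.2) with hτdef
    have hω1 : ω ^ β = 1 := by
      rw [hωdef]
      split_ifs with h0
      · exact one_pow β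
      · have hden : (ζ ^ a * p.1) ≠ 0 := mul_ne_zero (pow_ne_zero a hζ0) h0
        rw [div_pow, hx, div_self (pow_ne_zero β hden)]
    have hτ1 : τ ^ α = 1 := by
      rw [hτdef]
      split_ifs with h0
      · exact one_pow α
      · have hden : (ζ ^ b * p.2) ≠ 0 := mul_ne_zero (pow_ne_zero b hζ0) h0
        rw [div_pow, hy, div_self (pow_ne_zero α hden)]
    have hω2 : q.1 = ω * (ζ ^ a * p.1) := by
      rw [hωdef]
      split_ifs with h0
      · rw [h0] at hx ⊢
        rw [mul_zero, zero_pow hβ0.ne', pow_eq_zero_iff hβ0.ne'] at hx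
        simp [hx]
      · have hden : (ζ ^ a * p.1) ≠ 0 := mul_ne_zero (pow_ne_zero a hζ0) h0
        rw [div_mul_cancel₀ _ hden]
    have hτ2 : q.2 = τ * (ζ ^ b * p.2) := by
      rw [hτdef]
      split_ifs with h0
      · rw [h0] at hy ⊢
        rw [mul_zero, zero_pow hα0.ne', pow_eq_zero_iff hα0.ne'] at hy
        simp [hy]
      · have hden : (ζ ^ b * p.2) ≠ 0 := mul_ne_zero (pow_ne_zero b hζ0) h0
        rw [div_mul_cancel₀ _ hden]
    set t : ℕ := a ^ (Nat.totient β - 1) with htdef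
    set s : ℕ := b ^ (Nat.totient α - 1) with hsdef
    set ξ : ℂ := ω ^ t * τ ^ s * ζ with hξdef
    have hξd : ξ ^ d = 1 := by
      rw [hξdef, mul_pow, mul_pow, ← pow_mul, ← pow_mul,
        pow_one_of_dvd' hω1 (hβd.mul_left t), pow_one_of_dvd' hτ1 (hαd.mul_left s),
        hζd, one_mul, one_mul]
    have hξa : ξ ^ a * p.1 = q.1 := by
      rw [hξdef, mul_pow, mul_pow, ← pow_mul, ← pow_mul]
      rw [mul_comm t a, pow_inv_unit' hβ0 hω1 hcoaβ,
        pow_one_of_dvd' hτ1 (Dvd.dvd.mul_left hαa s), mul_one]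
      rw [hω2]; ring
    have hξb : ξ ^ b * p.2 = q.2 := by
      rw [hξdef, mul_pow, mul_pow, ← pow_mul, ← pow_mul]
      rw [mul_comm s b, pow_inv_unit' hα0 hτ1 hcobα,
        pow_one_of_dvd' hω1 (Dvd.dvd.mul_left hβb t), one_mul]
      rw [hτ2]; ring
    apply Quot.sound
    exact ⟨ξ, hξd, Prod.ext hξa.symm hξb.symm⟩
  · -- surjectivity
    rintro ⟨q⟩
    obtain ⟨x, hx⟩ := IsAlgClosed.exists_pow_nat_eq q.1 hβ0
    obtain ⟨y, hy⟩ := IsAlgClosed.exists_pow_nat_eq q.2 hα0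
    exact ⟨Quot.mk _ (x, y), congrArg (Quot.mk _) (Prod.ext hx hy)⟩
end

section
/- Let q₀,…,qₙ be positive integers with gcd(q₀,…,qₙ) = 1. Set d_i := gcd of all q_j with j ≠ i, and e_i := lcm of all d_j with j ≠ i. Then for i ≠ j, gcd(d_i, d_j) = 1; moreover gcd(e_i, d_i) = 1 and e_i divides q_i. -/
/-- For weights `q₀,…,qₙ` with `gcd = 1`, setting `dᵢ = gcd` of the other weights and
`eᵢ = lcm` of the other `d`'s, the `dᵢ` are pairwise coprime, `gcd(eᵢ, dᵢ) = 1`, and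
`eᵢ ∣ qᵢ`. -/
theorem stmt_8 (n : ℕ) (q : Fin (n + 1) → ℕ) (hq : ∀ i, 0 < q i)
    (hgcd : Finset.univ.gcd q = 1) (d e : Fin (n + 1) → ℕ)
    (hd : ∀ i, d i = (Finset.univ.erase i).gcd q)
    (he : ∀ i, e i = (Finset.univ.erase i).lcm d) :
    (∀ i j, i ≠ j → Nat.Coprime (d i) (d j)) ∧
    (∀ i, Nat.Coprime (e i) (d i)) ∧ (∀ i, e i ∣ q i) := by
  have hdvd : ∀ i k, i ≠ k → d i ∣ q k := by
    intro i k hik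
    rw [hd]
    exact Finset.gcd_dvd (Finset.mem_erase.mpr ⟨hik.symm, Finset.mem_univ k⟩)
  have hcop : ∀ i j, i ≠ j → Nat.Coprime (d i) (d j) := by
    intro i j hij
    have : Nat.gcd (d i) (d j) ∣ Finset.univ.gcd q := by
      apply Finset.dvd_gcd
      intro k _
      rcases eq_or_ne i k with rfl | hik
      · exact dvd_trans (Nat.gcd_dvd_right _ _) (hdvd j i (Ne.symm hij))
      · exact dvd_trans (Nat.gcd_dvd_left _ _) (hdvd i k hik)
    rw [hgcd] at this
    exact Nat.eq_one_of_dvd_one this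
  refine ⟨hcop, ?_, ?_⟩
  · intro i
    have h1 : e i ∣ ∏ j ∈ Finset.univ.erase i, d j := by
      rw [he]
      exact Finset.lcm_dvd fun j hj => Finset.dvd_prod_of_mem d hj
    have h2 : Nat.Coprime (∏ j ∈ Finset.univ.erase i, d j) (d i) :=
      Nat.Coprime.prod_left fun j hj =>
        hcop j i (Finset.mem_erase.mp hj).1
    exact Nat.Coprime.coprime_dvd_left h1 h2
  · intro i
    rw [he]
    exact Finset.lcm_dvd fun j hj => hdvd j i (Finset.mem_erase.mp hj).1
end

section
/- Let w = (p₀,…,pₙ) be a weight vector and φ₀ : ℂ^{n+1} → U₀ the chart of the weighted blow-up given by φ₀(x₀,…,xₙ) = ((x₀^{p₀}, x₀^{p₁}x₁, …, x₀^{pₙ}xₙ), [1 : x₁ : ⋯ : xₙ]_w). Then φ₀(x) = φ₀(y) if and only if there exists ξ ∈ μ_{p₀} with y₀ = ξ⁻¹x₀ and y_i = ξ^{p_i}x_i for i = 1,…,n. Hence φ₀ induces a bijection X(p₀; −1, p₁, …, pₙ) → U₀. -/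
/-- The orbit relation of the `ℂ*`-action on nonzero vectors with weights `w`, defining the
weighted projective space `ℙⁿ_w` as `Quot (wpRel n w)`. -/
def wpRel (n : ℕ) (w : Fin (n + 1) → ℕ) :
    {v : Fin (n + 1) → ℂ // v ≠ 0} → {v : Fin (n + 1) → ℂ // v ≠ 0} → Prop :=
  fun x y => ∃ t : ℂ, t ≠ 0 ∧ ∀ j, y.1 j = t ^ w j * x.1 j

/-- The chart map `φ₀` of the weighted `p`-blow-up of `ℂ^{n+1}`:
`φ₀(x₀,…,xₙ) = ((x₀^{p₀}, x₀^{p₁}x₁, …, x₀^{pₙ}xₙ), [1 : x₁ : ⋯ : xₙ]_p)`. -/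
def wbPhi (n : ℕ) (p : Fin (n + 1) → ℕ) (x : Fin (n + 1) → ℂ) :
    (Fin (n + 1) → ℂ) × Quot (wpRel n p) :=
  (Fin.cons (x 0 ^ p 0) (fun i : Fin n => x 0 ^ p i.succ * x i.succ),
   Quot.mk _ ⟨Fin.cons 1 (fun i : Fin n => x i.succ),
     fun h => one_ne_zero (α := ℂ) (by simpa using congrFun h 0)⟩)

/-!
The weighted projective component `[1 : x₁ : ⋯ : xₙ]` determines `(x₁, …, xₙ)` up to the
action of some `ξ` with `ξ^{p₀} = 1`, the leading coordinate `1` forcing `ξ` into `μ_{p₀}`.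
Off the exceptional divisor the affine component pins this root down as `ξ = x₀ / y₀`; on it,
`x₀ = y₀ = 0` and the `ξ` coming from the projective component already works. Conversely a point
of `U₀` given by `u` with `u₀ ≠ 0` and scale `t` is `φ₀(t s, u₁ / s^{p₁}, …, uₙ / s^{pₙ})` for
any `p₀`-th root `s` of `u₀`, which exists since `ℂ` is algebraically closed.
-/

section WeightedBlowupChart

lemma wpRel_equivalence (n : ℕ) (w : Fin (n + 1) → ℕ) : Equivalence (wpRel n w) := by
  constructor
  · exact fun x => ⟨1, one_ne_zero, fun j => by simp⟩
  · rintro x y ⟨t, ht, h⟩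
    refine ⟨t⁻¹, inv_ne_zero ht, fun j => ?_⟩
    rw [h j, ← mul_assoc, ← mul_pow, inv_mul_cancel₀ ht, one_pow, one_mul]
  · rintro x y z ⟨t, ht, h⟩ ⟨s, hs, h'⟩
    refine ⟨s * t, mul_ne_zero hs ht, fun j => ?_⟩
    rw [h' j, h j, ← mul_assoc, ← mul_pow]

/-- The relation `y = ξ · x` of the `μ_{p₀}`-action with weights `(-1, p₁, …, pₙ)`, whose
quotient is `X(p₀; -1, p₁, …, pₙ)`. -/
def cyclicQuotRel (n : ℕ) (p : Fin (n + 1) → ℕ) (x y : Fin (n + 1) → ℂ) : Prop :=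
  ∃ ξ : ℂ, ξ ^ p 0 = 1 ∧ y 0 = ξ⁻¹ * x 0 ∧ ∀ i : Fin n, y i.succ = ξ ^ p i.succ * x i.succ

/-- The chart image `U₀ = {u₀ ≠ 0}` of the weighted blow-up. -/
def wbChartImage (n : ℕ) (p : Fin (n + 1) → ℕ) : Set ((Fin (n + 1) → ℂ) × Quot (wpRel n p)) :=
  {z | ∃ (u : {v : Fin (n + 1) → ℂ // v ≠ 0}) (t : ℂ),
    Quot.mk (wpRel n p) u = z.2 ∧ u.1 0 ≠ 0 ∧ ∀ j, z.1 j = t ^ p j * u.1 j}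

variable {n : ℕ} {p : Fin (n + 1) → ℕ}

lemma wbPhi_fst_eq_iff (x y : Fin (n + 1) → ℂ) :
    (wbPhi n p x).1 = (wbPhi n p y).1 ↔ x 0 ^ p 0 = y 0 ^ p 0 ∧
      ∀ i : Fin n, x 0 ^ p i.succ * x i.succ = y 0 ^ p i.succ * y i.succ := by
  dsimp only [wbPhi]
  rw [Fin.cons_inj, funext_iff]

lemma wbPhi_snd_eq_iff (x y : Fin (n + 1) → ℂ) :
    (wbPhi n p x).2 = (wbPhi n p y).2 ↔ ∃ ξ : ℂ, ξ ≠ 0 ∧ ξ ^ p 0 = 1 ∧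
      ∀ i : Fin n, y i.succ = ξ ^ p i.succ * x i.succ := by
  simp [wbPhi, (wpRel_equivalence n p).quot_mk_eq_iff, wpRel, Fin.forall_fin_succ, eq_comm]

lemma cyclicQuotRel_of_wbPhi_eq (hp0 : 0 < p 0) {x y : Fin (n + 1) → ℂ}
    (h : wbPhi n p x = wbPhi n p y) : cyclicQuotRel n p x y := by
  obtain ⟨h0, hi⟩ := (wbPhi_fst_eq_iff x y).1 (congrArg Prod.fst h)
  by_cases hx0 : x 0 = 0
  · have hy0 : y 0 = 0 := by simpa [hx0, hp0.ne'] using h0.symm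
    obtain ⟨ξ, -, hξ, hyi⟩ := (wbPhi_snd_eq_iff x y).1 (congrArg Prod.snd h)
    exact ⟨ξ, hξ, by simp [hx0, hy0], hyi⟩
  · have hy0 : y 0 ≠ 0 := by
      rintro hy0
      simp [hy0, hp0.ne', hx0] at h0
    refine ⟨x 0 / y 0, by rw [div_pow, h0, div_self (pow_ne_zero _ hy0)], by field_simp,
      fun i => ?_⟩
    rw [div_pow, div_mul_eq_mul_div, eq_div_iff (pow_ne_zero _ hy0), hi i, mul_comm]

lemma wbPhi_eq_of_cyclicQuotRel (hp0 : 0 < p 0) {x y : Fin (n + 1) → ℂ}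
    (h : cyclicQuotRel n p x y) : wbPhi n p x = wbPhi n p y := by
  obtain ⟨ξ, hξ, hy0, hyi⟩ := h
  have hξ0 : ξ ≠ 0 := by
    rintro rfl
    simp [hp0.ne'] at hξ
  refine Prod.ext ((wbPhi_fst_eq_iff x y).2 ⟨?_, fun i => ?_⟩)
    ((wbPhi_snd_eq_iff x y).2 ⟨ξ, hξ0, hξ, hyi⟩)
  · rw [hy0, mul_pow, inv_pow, hξ, inv_one, one_mul]
  · rw [hy0, hyi i, mul_pow, inv_pow]
    field_simp

lemma wbPhi_eq_iff (hp0 : 0 < p 0) (x y : Fin (n + 1) → ℂ) :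
    wbPhi n p x = wbPhi n p y ↔ cyclicQuotRel n p x y :=
  ⟨cyclicQuotRel_of_wbPhi_eq hp0, wbPhi_eq_of_cyclicQuotRel hp0⟩

lemma wbPhi_mem_wbChartImage (x : Fin (n + 1) → ℂ) : wbPhi n p x ∈ wbChartImage n p :=
  ⟨_, x 0, rfl, one_ne_zero, Fin.cases (by simp [wbPhi]) fun i => by simp [wbPhi]⟩

lemma exists_wbPhi_eq (hp0 : 0 < p 0) {z : (Fin (n + 1) → ℂ) × Quot (wpRel n p)}
    (hz : z ∈ wbChartImage n p) : ∃ x, wbPhi n p x = z := by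
  obtain ⟨u, t, hu, hu0, hz⟩ := hz
  obtain ⟨s, hs⟩ := IsAlgClosed.exists_pow_nat_eq (u.1 0) hp0
  have hs0 : s ≠ 0 := by
    rintro rfl
    exact hu0 (by rw [← hs, zero_pow hp0.ne'])
  refine ⟨Fin.cons (t * s) fun i => u.1 i.succ / s ^ p i.succ, Prod.ext ?_ ?_⟩
  · funext j
    refine Fin.cases ?_ (fun i => ?_) j
    · simp [wbPhi, hz 0, mul_pow, hs]
    · simp only [wbPhi, Fin.cons_zero, Fin.cons_succ, mul_pow, hz i.succ]
      field_simp
  · rw [← hu]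
    refine ((wpRel_equivalence n p).quot_mk_eq_iff _ _).2 ⟨s, hs0, Fin.cases ?_ fun i => ?_⟩
    · simp [hs]
    · simp only [Fin.cons_succ]
      field_simp

lemma range_wbPhi (hp0 : 0 < p 0) : Set.range (wbPhi n p) = wbChartImage n p :=
  Set.Subset.antisymm (Set.range_subset_iff.2 wbPhi_mem_wbChartImage)
    fun _ hz => exists_wbPhi_eq hp0 hz

end WeightedBlowupChart

/-- `φ₀(x) = φ₀(y)` iff there is `ξ ∈ μ_{p₀}` with `y₀ = ξ⁻¹x₀` and `yᵢ = ξ^{pᵢ}xᵢ` for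
`i ≥ 1`; hence `φ₀` induces a bijection from `X(p₀; −1, p₁, …, pₙ)` onto
`U₀ = {u₀ ≠ 0} ⊂ Ĉ^{n+1}(p)`. -/
theorem stmt_12 (n : ℕ) (p : Fin (n + 1) → ℕ) (hp : ∀ j, 0 < p j) :
    (∀ x y : Fin (n + 1) → ℂ, wbPhi n p x = wbPhi n p y ↔
      ∃ ξ : ℂ, ξ ^ p 0 = 1 ∧ y 0 = ξ⁻¹ * x 0 ∧
        ∀ i : Fin n, y i.succ = ξ ^ p i.succ * x i.succ) ∧
    ∃ F : Quot (fun x y : Fin (n + 1) → ℂ => ∃ ξ : ℂ, ξ ^ p 0 = 1 ∧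
            y 0 = ξ⁻¹ * x 0 ∧ ∀ i : Fin n, y i.succ = ξ ^ p i.succ * x i.succ) →
          (Fin (n + 1) → ℂ) × Quot (wpRel n p),
      (∀ x, F (Quot.mk _ x) = wbPhi n p x) ∧ Function.Injective F ∧
      Set.range F = {z | ∃ (u : {v : Fin (n + 1) → ℂ // v ≠ 0}) (t : ℂ),
        Quot.mk (wpRel n p) u = z.2 ∧ u.1 0 ≠ 0 ∧ ∀ j, z.1 j = t ^ p j * u.1 j} := by
  have hφ := wbPhi_eq_iff (hp 0)
  refine ⟨hφ, Quot.lift (wbPhi n p) fun x y => (hφ x y).2, fun _ => rfl, ?_, ?_⟩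
  · rintro ⟨x⟩ ⟨y⟩ h
    exact Quot.sound ((hφ x y).1 h)
  · exact (Set.range_quot_lift _).trans (range_wbPhi (hp 0))
end
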